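/- Let A be a tensor of even order m and dimension n with auxiliary matrix Ā of block form [[M(A), O],[O, O]]. If A is a column adequate tensor, then Ā is a column adequate matrix. -/

import Mathlib

/-! Since `m - 1` is odd, `x ↦ x^[m-1]` maps `ℝⁿ` onto `ℝⁿ` and preserves the sign of every
coordinate, so the hypothesis `x_i (A x^{m-1})_i ≤ 0` at `x` is exactly the hypothesis
`z_i (M(A) z)_i ≤ 0` at `z = x^[m-1]`. Hence `M(A)` is column adequate, and padding it with
zero blocks leaves the condition unchanged on the first block and trivial on the second. -/

open Finset Matrix

/-- For a tensor `A` of order `k+1` and dimension `n`, `tmul A x i = (A x^k)_i`. -/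
def tmul {n k : ℕ} (A : Fin n → (Fin k → Fin n) → ℝ) (x : Fin n → ℝ) (i : Fin n) : ℝ :=
  ∑ f : Fin k → Fin n, A i f * ∏ j, x (f j)

/-- A tensor is column adequate if `x_i (A x^{m-1})_i ≤ 0` for all `i` implies `A x^{m-1} = 0`. -/
def ColumnAdequate {n k : ℕ} (A : Fin n → (Fin k → Fin n) → ℝ) : Prop :=
  ∀ x : Fin n → ℝ, (∀ i, x i * tmul A x i ≤ 0) → ∀ i, tmul A x i = 0

/-- A tensor is row diagonal if `a_{i i2...im}` can be nonzero only when `i2 = ... = im`. -/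
def RowDiagonal {n k : ℕ} (A : Fin n → (Fin k → Fin n) → ℝ) : Prop :=
  ∀ i f, A i f ≠ 0 → ∀ j j' : Fin k, f j = f j'

/-- The majorization matrix of a tensor: `M(A)_{ij} = a_{ijj...j}`. -/
def majorization {n k : ℕ} (A : Fin n → (Fin k → Fin n) → ℝ) : Matrix (Fin n) (Fin n) ℝ :=
  fun i j => A i (fun _ => j)

/-- A square matrix `M` (over any finite index type) is column adequate if
`z_i (Mz)_i ≤ 0` for all `i` implies `Mz = 0`. -/
def MatrixColumnAdequate {ι : Type*} [Fintype ι] (M : Matrix ι ι ℝ) : Prop :=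
  ∀ z : ι → ℝ, (∀ i, z i * M.mulVec z i ≤ 0) → M.mulVec z = 0

theorem Odd.pow_left_surjective_real {k : ℕ} (hk : Odd k) :
    Function.Surjective fun x : ℝ => x ^ k := by
  have hk0 : k ≠ 0 := hk.pos.ne'
  refine (continuous_pow k).surjective (Filter.tendsto_pow_atTop hk0) ?_
  have hneg : (fun x : ℝ => x ^ k) = fun x => -(-x) ^ k := by
    funext x
    rw [hk.neg_pow, neg_neg]
  rw [hneg]
  exact Filter.tendsto_neg_atTop_atBot.comp
    ((Filter.tendsto_pow_atTop hk0).comp Filter.tendsto_neg_atBot_atTop)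

theorem Odd.pow_mul_nonpos_iff {R : Type*} [CommRing R] [LinearOrder R] [IsStrictOrderedRing R]
    {k : ℕ} (hk : Odd k) {x t : R} : x ^ k * t ≤ 0 ↔ x * t ≤ 0 := by
  rcases eq_or_ne x 0 with rfl | hx
  · simp [zero_pow hk.pos.ne']
  have hsplit : x ^ k * t = x ^ (k - 1) * (x * t) := by
    rw [← mul_assoc, ← pow_succ, Nat.sub_add_cancel hk.pos]
  have heven : Even (k - 1) := Nat.Odd.sub_odd hk odd_one
  simpa [hsplit] using mul_le_mul_iff_right₀ (b := x * t) (c := 0) (heven.pow_pos hx)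

theorem MatrixColumnAdequate.fromBlocks_zero {ι κ : Type*} [Fintype ι] [Fintype κ]
    {M : Matrix ι ι ℝ} (hM : MatrixColumnAdequate M) :
    MatrixColumnAdequate (fromBlocks M 0 0 (0 : Matrix κ κ ℝ)) := by
  intro z hz
  have hMz : M *ᵥ (z ∘ Sum.inl) = 0 :=
    hM _ fun i => by simpa [fromBlocks_mulVec] using hz (Sum.inl i)
  simp [fromBlocks_mulVec, hMz]

theorem ColumnAdequate.matrixColumnAdequate_majorization {n k : ℕ} (hk : Odd k)
    {A : Fin n → (Fin k → Fin n) → ℝ}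
    (hblock : ∀ x : Fin n → ℝ, ∀ i, tmul A x i = (majorization A).mulVec (fun j => x j ^ k) i)
    (hA : ColumnAdequate A) : MatrixColumnAdequate (majorization A) := by
  intro z hz
  choose x hx using fun j => hk.pow_left_surjective_real (z j)
  beta_reduce at hx
  have hxz : (fun j => x j ^ k) = z := funext hx
  have htmul : ∀ i, tmul A x i = (majorization A *ᵥ z) i := by simpa [hxz] using hblock x
  have hsign : ∀ i, x i * tmul A x i ≤ 0 := fun i => by
    rw [← hk.pow_mul_nonpos_iff, hx, htmul]
    exact hz i
  funext i
  rw [← htmul]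
  exact hA x hsign i

/-- If `m` is even, `A x^{m-1} = M(A) x^{[m-1]}` for all `x`, and `A` is a column adequate
tensor, then the auxiliary matrix `Ā = [[M(A), O],[O, O]]` is a column adequate matrix. -/
theorem tensor_adequate_implies_auxiliary_adequate {m n p : ℕ} (hm : Even m) (hm2 : 2 ≤ m)
    (A : Fin n → (Fin (m - 1) → Fin n) → ℝ)
    (hblock : ∀ x : Fin n → ℝ, ∀ i,
      tmul A x i = (majorization A).mulVec (fun j => x j ^ (m - 1)) i)
    (hA : ColumnAdequate A) :
    MatrixColumnAdequate (Matrix.fromBlocks (majorization A) 0 0 (0 : Matrix (Fin p) (Fin p) ℝ)) := by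
  have hodd : Odd (m - 1) := Nat.Even.sub_odd (by omega) hm odd_one
  exact (hA.matrixColumnAdequate_majorization hodd hblock).fromBlocks_zero
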